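/- Assume in addition that, for a fixed s ∈ {1,…,d}, V_{1+s}^n = v_s/‖ v_s ‖. Then the function E_s^n ρ^n lies in the linear span of { X_i^n, ∂_{x_t}X_i^n, K_i^{n+1} : 1 ≤ i ≤ r, 1 ≤ t ≤ d }; in particular E_s^n ρ^n lies in the span of the augmented basis { X̃_k^{n+1} }, so that Σ_k ⟨X̃_k^{n+1}, E_s^n ρ^n⟩_x X̃_k^{n+1} = E_s^n ρ^n. -/

import Mathlib

open MeasureTheory Real Set

noncomputable section

/-- Partial derivative of `u` in the `i`-th coordinate direction. -/
def pd {d : ℕ} (i : Fin d) (u : (Fin d → ℝ) → ℝ) (x : Fin d → ℝ) : ℝ :=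
  fderiv ℝ u x (Pi.single i 1)

/-- Gaussian weight `f_{0v}(v) = exp(-|v|²/2)`. -/
def f0v {d : ℕ} (v : Fin d → ℝ) : ℝ := Real.exp (-(∑ i, v i ^ 2) / 2)

/-- Fundamental domain of the `d`-dimensional torus `Ω_x`. -/
def cube (d : ℕ) : Set (Fin d → ℝ) := Set.univ.pi fun _ => Set.Ioc (0 : ℝ) 1

/-- `L²(Ω_x)` inner product. -/
def ipx {d : ℕ} (u w : (Fin d → ℝ) → ℝ) : ℝ := ∫ x in cube d, u x * w x

/-- Weighted inner product `⟨u,w⟩_v = ∫ f_{0v} u w dv`. -/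
def ipv {d : ℕ} (u w : (Fin d → ℝ) → ℝ) : ℝ := ∫ v, f0v v * u v * w v

/-- Weighted norm `‖w‖ = ⟨w,w⟩_v^{1/2}`. -/
def nv {d : ℕ} (w : (Fin d → ℝ) → ℝ) : ℝ := Real.sqrt (ipv w w)

/-- Periodicity with period 1 in each coordinate (functions on the torus). -/
def Per {d : ℕ} (u : (Fin d → ℝ) → ℝ) : Prop := ∀ x i, u (x + Pi.single i 1) = u x

/-- All (iterated) derivatives have at most polynomial growth. -/
def PolyAll {d : ℕ} (g : (Fin d → ℝ) → ℝ) : Prop :=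
  ∀ n : ℕ, ∃ (C : ℝ) (p : ℕ), ∀ v, ‖iteratedFDeriv ℝ n g v‖ ≤ C * (1 + ‖v‖) ^ p

/-!
Pair the K-step for `k = 1 + s` with `V_k = v_s / ‖v_s‖`. Since all `v`-integrands are the
Gaussian times functions of temperate growth, one may integrate by parts in `v`: as
`∂_{v_t} V_k = δ_{ts} / ‖v_s‖`, the force term `∫ V_k E·∇_v f dv` equals `-E_s ρ / ‖v_s‖`, while
the transport term `∫ V_k v·∇_x f dv` is a fixed combination of the `∂_{x_t} X_i`. Solving the
K-step for `E_s ρ` writes it through `K^n_k` (a combination of the `X_i`), the `∂_{x_t} X_i` and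
`K^{n+1}_k`. Finally, on the span of an orthonormal family the orthogonal projection is the
identity.
-/

theorem Function.HasTemperateGrowth.fderiv {E F : Type*} [NormedAddCommGroup E]
    [NormedSpace ℝ E] [NormedAddCommGroup F] [NormedSpace ℝ F] {f : E → F}
    (hf : f.HasTemperateGrowth) : (fderiv ℝ f).HasTemperateGrowth :=
  ⟨hf.1.fderiv_right (by simp), fun n => by
    simpa only [norm_iteratedFDeriv_fderiv] using hf.2 (n + 1)⟩

variable {d : ℕ}

theorem hasTemperateGrowth_of_polyAll {g : (Fin d → ℝ) → ℝ} (hg : ContDiff ℝ (⊤ : ℕ∞) g)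
    (hpoly : PolyAll g) : g.HasTemperateGrowth :=
  ⟨hg, fun n => let ⟨C, p, h⟩ := hpoly n; ⟨p, C, h⟩⟩

@[fun_prop]
theorem Function.HasTemperateGrowth.pd (t : Fin d) {g : (Fin d → ℝ) → ℝ}
    (hg : g.HasTemperateGrowth) : (pd t g).HasTemperateGrowth :=
  (ContinuousLinearMap.apply ℝ ℝ (Pi.single t 1 : Fin d → ℝ)).hasTemperateGrowth.comp hg.fderiv

@[fun_prop]
theorem hasTemperateGrowth_apply (t : Fin d) : (fun v : Fin d → ℝ => v t).HasTemperateGrowth :=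
  (ContinuousLinearMap.proj t : (Fin d → ℝ) →L[ℝ] ℝ).hasTemperateGrowth

theorem pd_sum_mul {ι : Type*} [Fintype ι] (t : Fin d) (c : ι → ℝ)
    {X : ι → (Fin d → ℝ) → ℝ} {x : Fin d → ℝ} (hX : ∀ i, DifferentiableAt ℝ (X i) x) :
    pd t (fun y => ∑ i, c i * X i y) x = ∑ i, c i * pd t (X i) x := by
  simp [pd, fderiv_fun_sum fun i _ => (hX i).const_mul (c i), fderiv_const_mul (hX _)]

theorem pd_apply_div (t s : Fin d) (c : ℝ) (v : Fin d → ℝ) :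
    pd t (fun w => w s / c) v = (Pi.single t (1 : ℝ) : Fin d → ℝ) s / c := by
  have hlin : (fun w : Fin d → ℝ => w s / c)
      = ⇑(c⁻¹ • ContinuousLinearMap.proj (R := ℝ) (φ := fun _ : Fin d => ℝ) s) := by
    funext w; simp [div_eq_inv_mul]
  rw [pd, hlin, ContinuousLinearMap.fderiv]
  simp [div_eq_inv_mul]

theorem pd_f0v (t : Fin d) (v : Fin d → ℝ) : pd t f0v v = -(v t) * f0v v := by
  have hsq : HasFDerivAt (fun w : Fin d → ℝ => ∑ i, w i ^ 2) _ v :=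
    HasFDerivAt.fun_sum fun i _ => (hasFDerivAt_apply (𝕜 := ℝ) i v).pow 2
  have hf : f0v = fun w : Fin d → ℝ => Real.exp (-(1 / 2) * ∑ i, w i ^ 2) := by
    funext w; rw [f0v]; ring_nf
  rw [pd, hf, ((hsq.const_mul _).exp).fderiv]
  simp [Pi.single_apply, mul_comm]

theorem f0v_pos (v : Fin d → ℝ) : 0 < f0v v := Real.exp_pos _

theorem differentiable_f0v : Differentiable ℝ (f0v (d := d)) := by
  unfold f0v; fun_prop

theorem pd_f0v_mul (t : Fin d) {G : (Fin d → ℝ) → ℝ} (hG : Differentiable ℝ G)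
    (v : Fin d → ℝ) : pd t (fun w => f0v w * G w) v = f0v v * (pd t G v - v t * G v) := by
  have h := pd_f0v t v
  simp only [pd] at h ⊢
  rw [fderiv_fun_mul (differentiable_f0v v) (hG v)]
  simp only [add_apply, smul_apply, smul_eq_mul, h]
  ring

theorem integrable_one_add_abs_pow_mul_exp_neg_sq (p : ℕ) :
    Integrable fun x : ℝ => (1 + |x|) ^ p * Real.exp (-(1 / 2) * x ^ 2) := by
  have hb : (0 : ℝ) < 1 / 2 := by norm_num
  have hmoment : Integrable fun x : ℝ => |x| ^ p * Real.exp (-(1 / 2) * x ^ 2) := by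
    refine (integrable_rpow_mul_exp_neg_mul_sq hb (s := p) (by linarith [p.cast_nonneg (α := ℝ)])
      ).norm.congr (.of_forall fun x => ?_)
    simp [Real.abs_exp]
  refine (((integrable_exp_neg_mul_sq hb).add hmoment).const_mul (2 ^ (p - 1))).mono'
    (by fun_prop) (.of_forall fun x => ?_)
  have hbinom := add_pow_le zero_le_one (abs_nonneg x) p
  rw [one_pow] at hbinom
  rw [Real.norm_of_nonneg (by positivity), Pi.add_apply, ← one_add_mul, ← mul_assoc]
  exact mul_le_mul_of_nonneg_right hbinom (Real.exp_pos _).le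

theorem one_add_norm_le_prod_one_add_abs {ι : Type*} [Fintype ι] (v : ι → ℝ) :
    1 + ‖v‖ ≤ ∏ i, (1 + |v i|) := by
  classical
  have hone : ∀ i ∈ Finset.univ, (1 : ℝ) ≤ 1 + |v i| := fun i _ => by simp
  suffices ‖v‖ ≤ ∏ i, (1 + |v i|) - 1 by linarith
  refine (pi_norm_le_iff_of_nonneg (by linarith [Finset.one_le_prod hone])).2 fun i => ?_
  have hrest : (1 : ℝ) ≤ ∏ j ∈ Finset.univ.erase i, (1 + |v j|) :=
    Finset.one_le_prod fun j hj => hone j (Finset.mem_of_mem_erase hj)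
  rw [← Finset.mul_prod_erase _ _ (Finset.mem_univ i), Real.norm_eq_abs]
  nlinarith [abs_nonneg (v i)]

theorem pow_one_add_norm_mul_f0v_le (p : ℕ) (v : Fin d → ℝ) :
    (1 + ‖v‖) ^ p * f0v v ≤ ∏ i, ((1 + |v i|) ^ p * Real.exp (-(1 / 2) * v i ^ 2)) := by
  have hprod : f0v v = ∏ i, Real.exp (-(1 / 2) * v i ^ 2) := by
    rw [f0v, ← Real.exp_sum, ← Finset.mul_sum]; ring_nf
  rw [Finset.prod_mul_distrib, Finset.prod_pow, ← hprod]
  gcongr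
  exacts [(f0v_pos v).le, one_add_norm_le_prod_one_add_abs v]

theorem integrable_f0v_mul {h : (Fin d → ℝ) → ℝ} (hh : h.HasTemperateGrowth) :
    Integrable fun v => f0v v * h v := by
  obtain ⟨p, C, hC⟩ := hh.2 0
  simp only [norm_iteratedFDeriv_zero, Real.norm_eq_abs] at hC
  have hC0 : 0 ≤ C := by simpa using (abs_nonneg _).trans (hC 0)
  have hcont : Continuous fun v => f0v v * h v :=
    differentiable_f0v.continuous.mul hh.1.continuous
  refine ((Integrable.fintype_prod fun _ => integrable_one_add_abs_pow_mul_exp_neg_sq p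
    ).const_mul C).mono' hcont.aestronglyMeasurable (.of_forall fun v => ?_)
  rw [norm_mul, Real.norm_of_nonneg (f0v_pos v).le, Real.norm_eq_abs]
  calc f0v v * |h v| ≤ f0v v * (C * (1 + ‖v‖) ^ p) := by gcongr; exacts [(f0v_pos v).le, hC v]
    _ = C * ((1 + ‖v‖) ^ p * f0v v) := by ring
    _ ≤ _ := by gcongr; exact pow_one_add_norm_mul_f0v_le p v

theorem integrable_mul_pd_f0v_mul (t : Fin d) {φ G : (Fin d → ℝ) → ℝ}
    (hφ : φ.HasTemperateGrowth) (hG : G.HasTemperateGrowth) :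
    Integrable fun v => φ v * pd t (fun w => f0v w * G w) v := by
  simp_rw [pd_f0v_mul t (hG.1.differentiable (by simp)), mul_left_comm (φ _)]
  exact integrable_f0v_mul (by fun_prop)

theorem integral_mul_pd_f0v_mul (t : Fin d) {φ G : (Fin d → ℝ) → ℝ}
    (hφ : φ.HasTemperateGrowth) (hG : G.HasTemperateGrowth) :
    ∫ v, φ v * pd t (fun w => f0v w * G w) v = -∫ v, pd t φ v * (f0v v * G v) := by
  have hleft : Integrable fun v => pd t φ v * (f0v v * G v) := by
    simp_rw [mul_left_comm (pd t φ _)]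
    exact integrable_f0v_mul (by fun_prop)
  have hmul : Integrable fun v => φ v * (f0v v * G v) := by
    simp_rw [mul_left_comm (φ _)]
    exact integrable_f0v_mul (by fun_prop)
  exact integral_mul_fderiv_eq_neg_fderiv_mul_of_integrable hleft
    (integrable_mul_pd_f0v_mul t hφ hG) hmul (fun v _ => hφ.1.differentiable (by simp) v)
    (fun v _ => (differentiable_f0v.mul (hG.1.differentiable (by simp))) v)

section LowRank

variable {ι κ : Type*} [Fintype ι] [Fintype κ]

def lowRank (X : ι → (Fin d → ℝ) → ℝ) (S : ι → κ → ℝ) (V : κ → (Fin d → ℝ) → ℝ)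
    (x v : Fin d → ℝ) : ℝ :=
  f0v v * ∑ i, ∑ j, X i x * S i j * V j v

def vlasovRHS (E : (Fin d → ℝ) → Fin d → ℝ) (f : (Fin d → ℝ) → (Fin d → ℝ) → ℝ)
    (x v : Fin d → ℝ) : ℝ :=
  -(∑ t, v t * pd t (fun y => f y v) x) + ∑ t, E x t * pd t (f x) v

variable {X : ι → (Fin d → ℝ) → ℝ} {S : ι → κ → ℝ} {V : κ → (Fin d → ℝ) → ℝ}
  {φ : (Fin d → ℝ) → ℝ}

theorem integral_f0v_mul_sum_sum {h : ι → κ → (Fin d → ℝ) → ℝ}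
    (hh : ∀ i j, (h i j).HasTemperateGrowth) (c : ι → κ → ℝ) :
    ∫ v, f0v v * ∑ i, ∑ j, c i j * h i j v = ∑ i, ∑ j, c i j * ∫ v, f0v v * h i j v := by
  have hint : ∀ i j, Integrable fun v => c i j * (f0v v * h i j v) :=
    fun i j => (integrable_f0v_mul (hh i j)).const_mul _
  simp_rw [Finset.mul_sum, mul_left_comm (f0v _)]
  rw [integral_finsetSum _ fun i _ => integrable_finsetSum _ fun j _ => hint i j]
  refine Finset.sum_congr rfl fun i _ => ?_
  rw [integral_finsetSum _ fun j _ => hint i j]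
  simp_rw [integral_const_mul]

theorem pd_lowRank_left (t : Fin d) {x : Fin d → ℝ} (hX : ∀ i, DifferentiableAt ℝ (X i) x)
    (v : Fin d → ℝ) :
    pd t (fun y => lowRank X S V y v) x = f0v v * ∑ i, ∑ j, pd t (X i) x * S i j * V j v := by
  have hsep :
      (fun y => lowRank X S V y v) = fun y => ∑ i, (f0v v * ∑ j, S i j * V j v) * X i y := by
    funext y
    simp only [lowRank, Finset.mul_sum, Finset.sum_mul]
    exact Finset.sum_congr rfl fun i _ => Finset.sum_congr rfl fun j _ => by ring
  rw [hsep, pd_sum_mul t _ hX]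
  simp only [Finset.mul_sum, Finset.sum_mul]
  exact Finset.sum_congr rfl fun i _ => Finset.sum_congr rfl fun j _ => by ring

theorem integral_mul_vlasovRHS_lowRank (E : (Fin d → ℝ) → Fin d → ℝ)
    (hX : ∀ i, Differentiable ℝ (X i)) (hV : ∀ j, (V j).HasTemperateGrowth)
    (hφ : φ.HasTemperateGrowth) (x : Fin d → ℝ) :
    ∫ v, φ v * vlasovRHS E (lowRank X S V) x v
      = -(∑ t, ∑ i, ∑ j, S i j * (∫ v, f0v v * (v t * V j v * φ v)) * pd t (X i) x)
        - ∑ t, E x t * ∫ v, pd t φ v * lowRank X S V x v := by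
  have hG : (fun v => ∑ i, ∑ j, X i x * S i j * V j v).HasTemperateGrowth := by fun_prop
  have hsep : ∀ t, (fun v => φ v * (v t * pd t (fun y => lowRank X S V y v) x))
      = fun v => f0v v * ∑ i, ∑ j, (pd t (X i) x * S i j) * (v t * V j v * φ v) := fun t => by
    funext v
    rw [pd_lowRank_left t (fun i => hX i x)]
    simp only [Finset.mul_sum]
    exact Finset.sum_congr rfl fun i _ => Finset.sum_congr rfl fun j _ => by ring
  have htransport_int :
      ∀ t, Integrable fun v => φ v * (v t * pd t (fun y => lowRank X S V y v) x) := fun t => by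
    rw [hsep t]
    exact integrable_f0v_mul (by fun_prop)
  have htransport : ∀ t, ∫ v, φ v * (v t * pd t (fun y => lowRank X S V y v) x)
      = ∑ i, ∑ j, S i j * (∫ v, f0v v * (v t * V j v * φ v)) * pd t (X i) x := fun t => by
    rw [hsep t, integral_f0v_mul_sum_sum (h := fun _ j v => v t * V j v * φ v) (by fun_prop)]
    exact Finset.sum_congr rfl fun i _ => Finset.sum_congr rfl fun j _ => by ring
  have hfield_int : ∀ t, Integrable fun v => E x t * (φ v * pd t (lowRank X S V x) v) :=
    fun t => (integrable_mul_pd_f0v_mul t hφ hG).const_mul _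
  have hfield : ∀ t, ∫ v, E x t * (φ v * pd t (lowRank X S V x) v)
      = -(E x t * ∫ v, pd t φ v * lowRank X S V x v) := fun t => by
    have hibp : ∫ v, φ v * pd t (lowRank X S V x) v = -∫ v, pd t φ v * lowRank X S V x v :=
      integral_mul_pd_f0v_mul t hφ hG
    rw [integral_const_mul, hibp, mul_neg]
  simp only [vlasovRHS, mul_add, mul_neg, Finset.mul_sum, mul_left_comm (φ _) (E x _)]
  rw [integral_add ?_ (integrable_finsetSum _ fun t _ => hfield_int t), integral_neg,
    integral_finsetSum _ fun t _ => htransport_int t, integral_finsetSum _ fun t _ => hfield_int t]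
  · simp only [htransport, hfield, Finset.sum_neg_distrib, sub_eq_add_neg]
  · exact (integrable_finsetSum _ fun t _ => htransport_int t).neg

theorem mul_integral_lowRank_mem_span (E : (Fin d → ℝ) → Fin d → ℝ)
    (hX : ∀ i, Differentiable ℝ (X i)) (hV : ∀ j, (V j).HasTemperateGrowth)
    {τ c : ℝ} (hτ : τ ≠ 0) (hc : c ≠ 0) {s : Fin d} {k : κ} (hVk : V k = fun v => v s / c)
    {K1 : κ → (Fin d → ℝ) → ℝ}
    (hK1 : ∀ x, K1 k x
      = (∑ i, X i x * S i k) + τ * ∫ v, V k v * vlasovRHS E (lowRank X S V) x v) :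
    (fun x => E x s * ∫ v, lowRank X S V x v) ∈ Submodule.span ℝ
      (Set.range X ∪ Set.range (fun p : ι × Fin d => pd p.2 (X p.1)) ∪ Set.range K1) := by
  set M : Fin d → κ → ℝ := fun t j => ∫ v, f0v v * (v t * V j v * V k v)
  have hmoment : ∀ x, ∫ v, V k v * vlasovRHS E (lowRank X S V) x v
      = -(∑ t, ∑ i, ∑ j, S i j * M t j * pd t (X i) x)
        - c⁻¹ * (E x s * ∫ v, lowRank X S V x v) := fun x => by
    rw [integral_mul_vlasovRHS_lowRank E hX hV (hV k) x]
    congr 1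
    simp only [hVk, pd_apply_div, integral_const_mul]
    simp only [Pi.single_apply, ite_div, one_div, zero_div, ite_mul, zero_mul, mul_ite, mul_zero,
      Finset.sum_ite_eq, Finset.mem_univ, ↓reduceIte]
    ring
  have hEρ : (fun x => E x s * ∫ v, lowRank X S V x v) = (c / τ) • ((∑ i, S i k • X i)
      - τ • (∑ t, ∑ i, ∑ j, (S i j * M t j) • pd t (X i)) - K1 k) := by
    funext x
    simp only [Pi.smul_apply, Pi.sub_apply, Finset.sum_apply, smul_eq_mul, hK1, hmoment,
      mul_comm (X _ x)]
    field_simp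
    ring
  rw [hEρ]
  refine Submodule.smul_mem _ _ (Submodule.sub_mem _ (Submodule.sub_mem _ ?_ ?_) ?_)
  · exact Submodule.sum_mem _ fun i _ =>
      Submodule.smul_mem _ _ (Submodule.subset_span (.inl (.inl ⟨i, rfl⟩)))
  · exact Submodule.smul_mem _ _ (Submodule.sum_mem _ fun t _ => Submodule.sum_mem _ fun i _ =>
      Submodule.sum_mem _ fun j _ =>
        Submodule.smul_mem _ _ (Submodule.subset_span (.inl (.inr ⟨(i, t), rfl⟩))))
  · exact Submodule.subset_span (.inr ⟨k, rfl⟩)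

end LowRank

theorem sum_integral_mul_mul_eq_of_mem_span {α ι : Type*} [MeasurableSpace α] [Fintype ι]
    [DecidableEq ι] {μ : Measure α} {b : ι → α → ℝ}
    (hint : ∀ k l, Integrable (fun y => b k y * b l y) μ)
    (hon : ∀ k l, ∫ y, b k y * b l y ∂μ = if k = l then 1 else 0)
    {f : α → ℝ} (hf : f ∈ Submodule.span ℝ (Set.range b)) (x : α) :
    ∑ k, (∫ y, b k y * f y ∂μ) * b k x = f x := by
  obtain ⟨g, rfl⟩ := (Submodule.mem_span_range_iff_exists_fun ℝ).1 hf
  have hcoef (k : ι) : ∫ y, b k y * ∑ l, g l * b l y ∂μ = g k := by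
    simp only [Finset.mul_sum, mul_left_comm (b k _)]
    rw [integral_finsetSum _ fun l _ => (hint k l).const_mul (g l)]
    simp [integral_const_mul, hon]
  simp only [Finset.sum_apply, Pi.smul_apply, smul_eq_mul, hcoef]

theorem cube_subset_Icc : cube d ⊆ Set.Icc 0 1 := by
  rw [cube, ← Set.pi_univ_Icc]
  exact Set.pi_mono fun _ _ => Set.Ioc_subset_Icc_self

/-- if `V_{1+s}^n = v_s/‖v_s‖`, then `E_s^n ρ^n` lies in the span of
`{X_i^n, ∂_t X_i^n, K_i^{n+1}}`, hence in the span of the augmented basis `{X̃_k^{n+1}}`,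
so that its orthonormal expansion in the `X̃_k^{n+1}` reproduces it exactly. -/
theorem Erho_in_augmented_span
    (d r R : ℕ) (hr : d + 1 ≤ r)
    (τ : ℝ) (hτ : 0 < τ)
    (S : Fin r → Fin r → ℝ)
    (E : (Fin d → ℝ) → Fin d → ℝ)
    (X : Fin r → (Fin d → ℝ) → ℝ)
    (hXsm : ∀ i, ContDiff ℝ (⊤ : ℕ∞) (X i))
    (V : Fin r → (Fin d → ℝ) → ℝ)
    (hVsm : ∀ j, ContDiff ℝ (⊤ : ℕ∞) (V j)) (hVpoly : ∀ j, PolyAll (V j))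
    (hVon : ∀ i j, ipv (V i) (V j) = if i = j then (1 : ℝ) else 0)
    -- the low-rank function f^n and the right-hand side RHS[f^n]
    (fn : (Fin d → ℝ) → (Fin d → ℝ) → ℝ)
    (hfn : fn = fun x v => f0v v * ∑ i, ∑ j, X i x * S i j * V j v)
    (RHS : (Fin d → ℝ) → (Fin d → ℝ) → ℝ)
    (hRHS : RHS = fun x v =>
      -(∑ s, v s * pd s (fun y => fn y v) x) + ∑ s, E x s * pd s (fn x) v)
    -- the K step: K^{n+1}_k = K^n_k + τ ∫ V_k RHS[f^n] dv
    (K1 : Fin r → (Fin d → ℝ) → ℝ)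
    (hK1 : K1 = fun k x => (∑ i, X i x * S i k) + τ * ∫ v, V k v * RHS x v)
    -- the augmented basis X̃^{n+1}: orthonormal, containing X_i, ∂_t X_i and K_i^{n+1}
    (Xt : Fin R → (Fin d → ℝ) → ℝ)
    (hXtsm : ∀ k, ContDiff ℝ (⊤ : ℕ∞) (Xt k))
    (hXton : ∀ k l, ipx (Xt k) (Xt l) = if k = l then (1 : ℝ) else 0)
    (hspanX : ∀ i, X i ∈ Submodule.span ℝ (Set.range Xt))
    (hspanDX : ∀ i t, pd t (X i) ∈ Submodule.span ℝ (Set.range Xt))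
    (hspanK : ∀ i, K1 i ∈ Submodule.span ℝ (Set.range Xt))
    -- the fixed index s and the assumption V_{1+s} = v_s/‖v_s‖
    (s : Fin d)
    (hVs : V ⟨s.1 + 1, by have := s.isLt; omega⟩
      = fun v => v s / nv fun v : Fin d → ℝ => v s)
    -- the moment ρ^n
    (ρ : (Fin d → ℝ) → ℝ) (hρ : ρ = fun x => ∫ v, fn x v) :
    (fun x => E x s * ρ x) ∈ Submodule.span ℝ
        (Set.range X ∪ Set.range (fun p : Fin r × Fin d => pd p.2 (X p.1))
          ∪ Set.range K1) ∧
      ∀ x, (∑ k, ipx (Xt k) (fun y => E y s * ρ y) * Xt k x) = E x s * ρ x := by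
  have hc : nv (fun v : Fin d → ℝ => v s) ≠ 0 := by
    -- otherwise `V_{1+s} = v_s / 0 = 0` could not have unit norm
    intro h0
    have hunit := hVon ⟨s.1 + 1, by omega⟩ ⟨s.1 + 1, by omega⟩
    rw [hVs, h0] at hunit
    simp [ipv] at hunit
  have hmem : (fun x => E x s * ρ x) ∈ Submodule.span ℝ
      (Set.range X ∪ Set.range (fun p : Fin r × Fin d => pd p.2 (X p.1)) ∪ Set.range K1) := by
    subst hfn hRHS hK1 hρ
    exact mul_integral_lowRank_mem_span E (fun i => (hXsm i).differentiable (by simp))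
      (fun j => hasTemperateGrowth_of_polyAll (hVsm j) (hVpoly j)) hτ.ne' hc hVs fun _ => rfl
  refine ⟨hmem, sum_integral_mul_mul_eq_of_mem_span (μ := volume.restrict (cube d))
    (fun k l => ?_) hXton (Submodule.span_le.2 ?_ hmem)⟩
  · exact ((hXtsm k).continuous.mul (hXtsm l).continuous).integrableOn_Icc.mono_set
      cube_subset_Icc
  · rintro f ((⟨i, rfl⟩ | ⟨⟨i, t⟩, rfl⟩) | ⟨i, rfl⟩)
    exacts [hspanX i, hspanDX i t, hspanK i]
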